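/- arXiv:2512.14624 — 2 statements merged into one kernel-verified Lean document; each statement's English description precedes it below -/
import Mathlib

section
/- If Y₁,…,Yₙ are i.i.d. Bernoulli(p) random variables with p ∈ (0,1) and Ȳ := n⁻¹∑ᵢYᵢ, then for every ε > 0, P(kl₊(Ȳ, p) ≥ ε) ≤ e^{−nε}, where kl₊(p',q) := 𝟙{p'>q}·kl(p',q). -/
open Real

/-- The Bernoulli Kullback–Leibler divergence `kl : [0,1] × [0,1] → [0,∞]`, with the
conventions `kl(0,q) = −log(1−q)`, `kl(1,q) = −log q`, and the value `∞` when a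
logarithm of zero would occur. -/
noncomputable def bernKL (p q : ℝ) : EReal :=
  if p = 0 then (if q = 1 then ⊤ else ((-Real.log (1 - q) : ℝ) : EReal))
  else if p = 1 then (if q = 0 then ⊤ else ((-Real.log q : ℝ) : EReal))
  else if q = 0 ∨ q = 1 then ⊤
  else ((p * Real.log (p / q) + (1 - p) * Real.log ((1 - p) / (1 - q)) : ℝ) : EReal)


/-- `kl₊(p,q) := kl(p,q)` if `p > q`, and `0` otherwise. -/
noncomputable def bernKLplus (p q : ℝ) : EReal :=
  if q < p then bernKL p q else 0

open MeasureTheory in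
/-- The Bernoulli(p) distribution, as a measure on `ℝ` putting mass `p` at `1`
and mass `1−p` at `0`. -/
noncomputable def bernoulliMeasure (p : ℝ) : Measure ℝ :=
  ENNReal.ofReal p • Measure.dirac 1 + ENNReal.ofReal (1 - p) • Measure.dirac 0

/-! Almost surely `Ȳ ≤ 1`, and on `[p, 1]` the divergence `kl(·, p)` is continuous and strictly
increasing from `0` to `-log p`. So the event `kl₊(Ȳ, p) ≥ ε` is null when `ε > -log p`, and is
otherwise contained, up to a null set, in `{Ȳ ≥ a}` where `kl(a, p) = ε`. For `a < 1` the
Chernoff bound with the optimal tilt `eᵗ = a(1-p)/(p(1-a))` gives `P(Ȳ ≥ a) ≤ exp(-n kl(a, p))`;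
the case `a = 1` follows by letting `a ↑ 1`. -/

open MeasureTheory ProbabilityTheory Set

/-- `kl(x, p)` as a real number (the finite values of `bernKL x p`), written as cross-entropy
minus binary entropy. -/
noncomputable def bernKLReal (x p : ℝ) : ℝ :=
  -binEntropy x - x * log p - (1 - x) * log (1 - p)

section bernKLReal

variable {x p : ℝ}

lemma bernKLReal_self (p : ℝ) : bernKLReal p p = 0 := by
  simp only [bernKLReal, binEntropy, log_inv]
  ring

lemma bernKLReal_one (p : ℝ) : bernKLReal 1 p = -log p := by
  simp [bernKLReal]

@[fun_prop]
lemma continuous_bernKLReal (p : ℝ) : Continuous (bernKLReal · p) := by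
  unfold bernKLReal
  fun_prop

lemma hasDerivAt_bernKLReal (hx₀ : x ≠ 0) (hx₁ : x ≠ 1) :
    HasDerivAt (bernKLReal · p) (log x - log (1 - x) - (log p - log (1 - p))) x := by
  have h : HasDerivAt (bernKLReal · p) (-(log (1 - x) - log x) - 1 * log p - -1 * log (1 - p)) x :=
    ((hasDerivAt_binEntropy hx₀ hx₁).neg.sub ((hasDerivAt_id x).mul_const (log p))).sub
      (((hasDerivAt_id x).const_sub 1).mul_const (log (1 - p)))
  exact h.congr_deriv (by ring)

lemma strictMonoOn_bernKLReal (hp : p ∈ Ioo 0 1) : StrictMonoOn (bernKLReal · p) (Icc p 1) := by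
  refine strictMonoOn_of_deriv_pos (convex_Icc p 1) (continuous_bernKLReal p).continuousOn ?_
  rw [interior_Icc]
  rintro x ⟨hpx, hx1⟩
  have hx0 : 0 < x := hp.1.trans hpx
  rw [(hasDerivAt_bernKLReal hx0.ne' hx1.ne).deriv]
  have h₁ : log p < log x := log_lt_log hp.1 hpx
  have h₂ : log (1 - x) < log (1 - p) := log_lt_log (by linarith) (by linarith)
  linarith

lemma bernKLplus_eq_bernKLReal (hp : p ∈ Ioo 0 1) (hpx : p < x) (hx : x ≤ 1) :
    bernKLplus x p = bernKLReal x p := by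
  rw [bernKLplus, if_pos hpx]
  rcases hx.eq_or_lt with rfl | hx
  · rw [bernKL, if_neg one_ne_zero, if_pos rfl, if_neg hp.1.ne', bernKLReal_one]
  have hx0 : 0 < x := hp.1.trans hpx
  rw [bernKL, if_neg hx0.ne', if_neg hx.ne, if_neg (by rintro (h | h) <;> linarith [hp.1, hp.2])]
  congr 1
  rw [log_div hx0.ne' hp.1.ne', log_div (by linarith) (by linarith [hp.2])]
  simp only [bernKLReal, binEntropy, log_inv]
  ring

lemma bernKLplus_le_neg_log (hp : p ∈ Ioo 0 1) (hx : x ≤ 1) :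
    bernKLplus x p ≤ ((-log p : ℝ) : EReal) := by
  by_cases hpx : p < x
  · rw [bernKLplus_eq_bernKLReal hp hpx hx, EReal.coe_le_coe_iff, ← bernKLReal_one]
    exact (strictMonoOn_bernKLReal hp).monotoneOn ⟨hpx.le, hx⟩ ⟨hp.2.le, le_rfl⟩ hx
  · rw [bernKLplus, if_neg hpx, EReal.coe_nonneg, neg_nonneg]
    exact log_nonpos hp.1.le hp.2.le

lemma le_of_bernKLReal_le_bernKLplus {a : ℝ} (hp : p ∈ Ioo 0 1) (ha : a ∈ Ioc p 1) (hx : x ≤ 1)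
    (h : (bernKLReal a p : EReal) ≤ bernKLplus x p) : a ≤ x := by
  have hmono := strictMonoOn_bernKLReal hp
  by_cases hpx : p < x
  · rw [bernKLplus_eq_bernKLReal hp hpx hx, EReal.coe_le_coe_iff] at h
    exact (hmono.le_iff_le ⟨ha.1.le, ha.2⟩ ⟨hpx.le, hx⟩).mp h
  · rw [bernKLplus, if_neg hpx, EReal.coe_nonpos] at h
    have : bernKLReal p p < bernKLReal a p := hmono ⟨le_rfl, hp.2.le⟩ ⟨ha.1.le, ha.2⟩ ha.1
    linarith [bernKLReal_self p]

lemma exists_bernKLReal_eq (hp : p ∈ Ioo 0 1) {ε : ℝ} (hε : 0 < ε) (hε' : ε ≤ -log p) :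
    ∃ a ∈ Ioc p 1, bernKLReal a p = ε := by
  obtain ⟨a, ⟨hpa, ha1⟩, ha⟩ := intermediate_value_Icc hp.2.le
    (continuous_bernKLReal p).continuousOn
    (show ε ∈ Icc (bernKLReal p p) (bernKLReal 1 p) by
      rw [bernKLReal_self, bernKLReal_one]; exact ⟨hε.le, hε'⟩)
  refine ⟨a, ⟨hpa.lt_of_ne ?_, ha1⟩, ha⟩
  rintro rfl
  exact hε.ne ((bernKLReal_self p).symm.trans ha)

/-- The Chernoff exponent `t a - log (1 - p + p eᵗ)` is maximised at this `t`, where it equals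
`kl(a, p)`. -/
lemma exp_neg_bernKLReal {a t : ℝ} (ha : a ∈ Ioo 0 1) (hp : p ∈ Ioo 0 1)
    (ht : exp t = a * (1 - p) / (p * (1 - a))) :
    exp (-bernKLReal a p) = exp (-t * a) * (1 - p + p * exp t) := by
  obtain ⟨ha₀, ha₁⟩ := ha
  obtain ⟨hp₀, hp₁⟩ := hp
  have ht' : t = log a + log (1 - p) - log p - log (1 - a) := by
    rw [← log_exp t, ht, log_div (by positivity) (by nlinarith), log_mul ha₀.ne' (by linarith),
      log_mul hp₀.ne' (by linarith)]
    ring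
  have hM : 1 - p + p * exp t = exp (log (1 - p) - log (1 - a)) := by
    rw [exp_sub, exp_log (by linarith), exp_log (by linarith), ht]
    field_simp
    ring
  rw [hM, ← exp_add, ht']
  congr 1
  simp only [bernKLReal, binEntropy, log_inv]
  ring

end bernKLReal

section bernoulliMeasure

variable {p : ℝ}

lemma mgf_id_bernoulliMeasure (hp₀ : 0 ≤ p) (hp₁ : p ≤ 1) (t : ℝ) :
    mgf id (_root_.bernoulliMeasure p) t = 1 - p + p * exp t := by
  have hint : ∀ x : ℝ, ∀ c : ENNReal, c ≠ ⊤ →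
      Integrable (fun y => exp (t * id y)) (c • Measure.dirac x) :=
    fun x c hc => (integrable_dirac (by simp)).smul_measure hc
  rw [_root_.bernoulliMeasure, mgf_add_measure (hint _ _ ENNReal.ofReal_ne_top)
      (hint _ _ ENNReal.ofReal_ne_top), mgf_smul_measure, mgf_smul_measure, mgf_dirac', mgf_dirac',
    ENNReal.toReal_ofReal hp₀, ENNReal.toReal_ofReal (by linarith)]
  simp only [id, mul_one, mul_zero, exp_zero]
  ring

lemma ae_bernoulliMeasure_le_one (p : ℝ) : ∀ᵐ x ∂_root_.bernoulliMeasure p, x ≤ 1 := by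
  rw [_root_.bernoulliMeasure, ae_add_measure_iff]
  exact ⟨Measure.ae_smul_measure (by simp [ae_dirac_eq]) _,
    Measure.ae_smul_measure (by simp [ae_dirac_eq]) _⟩

lemma ae_sum_le_card_of_map_eq_bernoulliMeasure {Ω ι : Type*} [MeasurableSpace Ω]
    {μ : Measure Ω} [Fintype ι] {Y : ι → Ω → ℝ} (hmeas : ∀ i, Measurable (Y i))
    (hdist : ∀ i, μ.map (Y i) = _root_.bernoulliMeasure p) :
    ∀ᵐ ω ∂μ, ∑ i, Y i ω ≤ Fintype.card ι := by
  filter_upwards [ae_all_iff.2 fun i =>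
    ae_of_ae_map (hmeas i).aemeasurable ((hdist i).symm ▸ ae_bernoulliMeasure_le_one p)] with ω hω
  simpa using Finset.sum_le_sum fun i (_ : i ∈ Finset.univ) => hω i

end bernoulliMeasure

lemma ProbabilityTheory.iIndepFun.measureReal_sum_ge_le {Ω ι : Type*} [MeasurableSpace Ω]
    {μ : Measure Ω} [IsProbabilityMeasure μ] [Fintype ι] {Y : ι → Ω → ℝ} (hindep : iIndepFun Y μ)
    (hmeas : ∀ i, Measurable (Y i)) {t M : ℝ} (ht : 0 ≤ t) (hM : 0 < M)
    (hmgf : ∀ i, mgf (Y i) μ t = M) (a : ℝ) :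
    μ.real {ω | Fintype.card ι * a ≤ ∑ i, Y i ω} ≤ (exp (-t * a) * M) ^ Fintype.card ι := by
  have hint : ∀ i, Integrable (fun ω => exp (t * Y i ω)) μ :=
    fun i => mgf_pos_iff.mp (hmgf i ▸ hM)
  have h := measure_ge_le_exp_mul_mgf (X := ∑ i, Y i) (Fintype.card ι * a) ht
    (hindep.integrable_exp_mul_sum hmeas fun i _ => hint i)
  rw [hindep.mgf_sum hmeas] at h
  simp only [hmgf, Finset.prod_const, Finset.card_univ, Finset.sum_apply] at h
  rw [mul_pow, ← exp_nat_mul]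
  convert h using 3
  ring

section Chernoff

variable {Ω ι : Type*} [MeasurableSpace Ω] {μ : Measure Ω} [IsProbabilityMeasure μ] [Fintype ι]
  {Y : ι → Ω → ℝ} {p : ℝ}

lemma measure_sum_ge_le_exp_neg_bernKLReal_of_lt_one (hp : p ∈ Ioo 0 1)
    (hindep : iIndepFun Y μ) (hmeas : ∀ i, Measurable (Y i))
    (hdist : ∀ i, μ.map (Y i) = _root_.bernoulliMeasure p) {a : ℝ} (hpa : p < a) (ha : a < 1) :
    μ {ω | Fintype.card ι * a ≤ ∑ i, Y i ω} ≤
      ENNReal.ofReal (exp (-(Fintype.card ι * bernKLReal a p))) := by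
  obtain ⟨hp₀, hp₁⟩ := hp
  set t := log (a * (1 - p) / (p * (1 - a)))
  have hr : 1 ≤ a * (1 - p) / (p * (1 - a)) := by
    rw [one_le_div (by nlinarith)]
    nlinarith
  have hmgf : ∀ i, mgf (Y i) μ t = 1 - p + p * exp t := fun i => by
    rw [← mgf_id_map (hmeas i).aemeasurable, hdist i, mgf_id_bernoulliMeasure hp₀.le hp₁.le]
  have h := hindep.measureReal_sum_ge_le hmeas (log_nonneg hr) (by positivity) hmgf a
  rw [← exp_neg_bernKLReal ⟨hp₀.trans hpa, ha⟩ ⟨hp₀, hp₁⟩ (exp_log (by linarith)),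
    ← exp_nat_mul] at h
  rw [← ofReal_measureReal]
  exact ENNReal.ofReal_le_ofReal (by simpa using h)

lemma measure_sum_ge_le_exp_neg_bernKLReal (hp : p ∈ Ioo 0 1)
    (hindep : iIndepFun Y μ) (hmeas : ∀ i, Measurable (Y i))
    (hdist : ∀ i, μ.map (Y i) = _root_.bernoulliMeasure p) {a : ℝ} (ha : a ∈ Ioc p 1) :
    μ {ω | Fintype.card ι * a ≤ ∑ i, Y i ω} ≤
      ENNReal.ofReal (exp (-(Fintype.card ι * bernKLReal a p))) := by
  have hbound : ∀ b ∈ Ioo p a, μ {ω | Fintype.card ι * a ≤ ∑ i, Y i ω} ≤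
      ENNReal.ofReal (exp (-(Fintype.card ι * bernKLReal b p))) := by
    intro b hb
    refine le_trans (measure_mono fun ω hω => ?_)
      (measure_sum_ge_le_exp_neg_bernKLReal_of_lt_one hp hindep hmeas hdist hb.1
        (hb.2.trans_le ha.2))
    exact le_trans (mul_le_mul_of_nonneg_left hb.2.le (Nat.cast_nonneg _)) hω
  have hcont : ContinuousAt
      (fun b => ENNReal.ofReal (exp (-(Fintype.card ι * bernKLReal b p)))) a :=
    ENNReal.continuous_ofReal.continuousAt.comp (by fun_prop)
  refine ge_of_tendsto (hcont.tendsto.mono_left (nhdsWithin_le_nhds (s := Iio a))) ?_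
  filter_upwards [Ioo_mem_nhdsLT ha.1] with b hb using hbound b hb

end Chernoff

open MeasureTheory ProbabilityTheory in
/-- If `Y₁,…,Yₙ` are i.i.d. `Bernoulli(p)` with `p ∈ (0,1)` and `Ȳ := n⁻¹ ∑ᵢ Yᵢ`, then for
every `ε > 0`, `P(kl₊(Ȳ, p) ≥ ε) ≤ exp(−nε)`. -/
theorem bernKLplus_concentration {Ω : Type*} [MeasurableSpace Ω] (μ : Measure Ω)
    [IsProbabilityMeasure μ] (n : ℕ) (hn : 0 < n) (p : ℝ) (hp : p ∈ Set.Ioo (0:ℝ) 1)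
    (Y : Fin n → Ω → ℝ) (hmeas : ∀ i, Measurable (Y i))
    (hindep : iIndepFun Y μ)
    (hdist : ∀ i, μ.map (Y i) = _root_.bernoulliMeasure p)
    (ε : ℝ) (hε : 0 < ε) :
    μ {ω | ((ε : ℝ) : EReal) ≤ bernKLplus ((∑ i, Y i ω) / n) p} ≤
      ENNReal.ofReal (Real.exp (-(n * ε))) := by
  have hn' : (0 : ℝ) < n := Nat.cast_pos.mpr hn
  have hmean : ∀ᵐ ω ∂μ, (∑ i, Y i ω) / n ≤ 1 :=
    (ae_sum_le_card_of_map_eq_bernoulliMeasure hmeas hdist).mono fun ω hω => by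
      rw [div_le_one hn']
      simpa using hω
  rcases le_or_gt ε (-log p) with hεp | hεp
  · obtain ⟨a, ha, rfl⟩ := exists_bernKLReal_eq hp hε hεp
    calc _ ≤ μ {ω | (n : ℝ) * a ≤ ∑ i, Y i ω} :=
          measure_mono_ae <| hmean.mono fun ω hω hE => by
            have haY := le_of_bernKLReal_le_bernKLplus hp ha hω hE
            rwa [le_div_iff₀ hn', mul_comm] at haY
      _ ≤ _ := by simpa using measure_sum_ge_le_exp_neg_bernKLReal hp hindep hmeas hdist ha
  · have hnull : μ {ω | (ε : EReal) ≤ bernKLplus ((∑ i, Y i ω) / n) p} = 0 :=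
      measure_eq_zero_iff_ae_notMem.2 <| hmean.mono fun ω hω hE =>
        hεp.not_ge (EReal.coe_le_coe_iff.mp (hE.trans (bernKLplus_le_neg_log hp hω)))
    exact hnull ▸ zero_le
end

section
/- In the setting of the dyadic quantile grid for a continuous log-concave density f₀ (u_j := 2^{j−1} for j ≤ 0, u_j := 1 − 2^{−(j+1)} for j ≥ 1, a_j := F₀⁻¹(u_j)), for every j ∈ ℤ: 2^{−(|j|+3)}/f₀(a_j) ≤ a_{j+1} − a_j ≤ min{ 2^{−|j|}/f₀(a_j), 2^{−|j+1|}/f₀(a_{j+1}) } ≤ 2 / max{|ψ₀(a_j)|, |ψ₀(a_{j+1})|}, where ψ₀ is the score function of f₀. -/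
/-!
Log-concavity gives `f t * f y ≤ f x * f (t + y - x)` for `t ≤ x ≤ y`; integrating in `t` shows
that `F₀ / f₀` is nondecreasing and `(1 - F₀) / f₀` is nonincreasing. Integrating these
hazard-rate monotonicities over `[a_j, a_{j+1}]` compares the mass `u_{j+1} - u_j` with the gap
times `f₀` at either endpoint. Comparing the right slopes of `log f₀` with those of `log F₀` and
`log (1 - F₀)` gives `|ψ₀| * min F₀ (1 - F₀) ≤ f₀`, and on the dyadic grid
`2 * min u_j (1 - u_j) = 2^{-|j|}`.
-/

open MeasureTheory Real

/-- The dyadic grid of quantile levels: `u_j = 2^{j−1}` for `j ≤ 0` and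
`u_j = 1 − 2^{−(j+1)}` for `j ≥ 1`. -/
noncomputable def uGrid (j : ℤ) : ℝ := if j ≤ 0 then (2:ℝ) ^ (j - 1) else 1 - (2:ℝ) ^ (-(j + 1))

open Set Filter Topology

def IsLogConcave (f : ℝ → ℝ) : Prop :=
  ∀ x y : ℝ, ∀ t ∈ Icc (0:ℝ) 1, f x ^ t * f y ^ (1 - t) ≤ f (t * x + (1 - t) * y)

theorem IsLogConcave.mul_le_mul_add_sub {f : ℝ → ℝ} (hlogconc : IsLogConcave f)
    (hf_nonneg : ∀ x, 0 ≤ f x) {p q r : ℝ} (hpr : p ≤ r) (hrq : r ≤ q) :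
    f p * f q ≤ f r * f (p + q - r) := by
  rcases (hpr.trans hrq).eq_or_lt with rfl | hpq
  · obtain rfl : r = p := le_antisymm hrq hpr
    simp
  set s := (q - r) / (q - p)
  have hs : s * (q - p) = q - r := div_mul_cancel₀ _ (by linarith)
  have hs01 : s ∈ Icc (0:ℝ) 1 :=
    ⟨div_nonneg (by linarith) (by linarith), (div_le_one (by linarith)).2 (by linarith)⟩
  have h₁ := hlogconc p q s hs01
  have h₂ := hlogconc p q (1 - s) ⟨by linarith [hs01.2], by linarith [hs01.1]⟩
  rw [show s * p + (1 - s) * q = r by linear_combination -hs] at h₁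
  rw [show (1 - s) * p + (1 - (1 - s)) * q = p + q - r by linear_combination hs, sub_sub_cancel]
    at h₂
  have rpow_split : ∀ x, f x ^ s * f x ^ (1 - s) = f x := fun x => by
    rw [← rpow_add' (hf_nonneg x) (by norm_num), add_sub_cancel, rpow_one]
  calc f p * f q = (f p ^ s * f q ^ (1 - s)) * (f p ^ (1 - s) * f q ^ s) := by
        rw [mul_mul_mul_comm, rpow_split, mul_comm (f q ^ (1 - s)), rpow_split]
    _ ≤ f r * f (p + q - r) := mul_le_mul h₁ h₂
      (mul_nonneg (rpow_nonneg (hf_nonneg p) _) (rpow_nonneg (hf_nonneg q) _)) (hf_nonneg r)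

theorem max_mul_min_le_of_mul_le {x y p q c : ℝ} (hx : 0 ≤ x) (hy : 0 ≤ y)
    (hxp : x * p ≤ c) (hyq : y * q ≤ c) : max x y * min p q ≤ c := by
  rcases le_total x y with hxy | hxy
  · rw [max_eq_right hxy]
    exact (mul_le_mul_of_nonneg_left (min_le_right p q) hy).trans hyq
  · rw [max_eq_left hxy]
    exact (mul_le_mul_of_nonneg_left (min_le_left p q) hx).trans hxp

theorem le_of_hasDerivWithinAt_Ici {g h : ℝ → ℝ} {g' h' x : ℝ}
    (hg : HasDerivWithinAt g g' (Ici x) x) (hh : HasDerivWithinAt h h' (Ici x) x)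
    (hle : ∀ᶠ y in 𝓝[>] x, g y - g x ≤ h y - h x) : g' ≤ h' := by
  rw [hasDerivWithinAt_iff_tendsto_slope, Ici_sdiff_left] at hg hh
  refine le_of_tendsto_of_tendsto hg hh ?_
  filter_upwards [hle, self_mem_nhdsWithin] with y hy (hxy : x < y)
  simp only [slope_def_field]
  exact div_le_div_of_nonneg_right hy (sub_nonneg.2 hxy.le)

section Translate

variable {E : Type*} [NormedAddCommGroup E] [NormedSpace ℝ E]

theorem integral_Iic_comp_add_right (f : ℝ → E) (x c : ℝ) :
    ∫ t in Iic x, f (t + c) = ∫ t in Iic (x + c), f t := by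
  simpa [preimage_add_const_Iic] using
    (measurePreserving_add_right volume c).setIntegral_preimage_emb
      (Homeomorph.addRight c).isClosedEmbedding.measurableEmbedding f (Iic (x + c))

theorem integral_Ioi_comp_add_right (f : ℝ → E) (x c : ℝ) :
    ∫ t in Ioi x, f (t + c) = ∫ t in Ioi (x + c), f t := by
  simpa [preimage_add_const_Ioi] using
    (measurePreserving_add_right volume c).setIntegral_preimage_emb
      (Homeomorph.addRight c).isClosedEmbedding.measurableEmbedding f (Ioi (x + c))

end Translate

noncomputable def densityCDF (f : ℝ → ℝ) (x : ℝ) : ℝ := ∫ t in Iic x, f t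

section DensityCDF

variable {f : ℝ → ℝ}

theorem densityCDF_mono (hf_nonneg : ∀ x, 0 ≤ f x) (hf_int : Integrable f) :
    Monotone (densityCDF f) := fun _ _ hxy =>
  setIntegral_mono_set hf_int.integrableOn (.of_forall hf_nonneg)
    (Iic_subset_Iic.2 hxy).eventuallyLE

theorem integral_Ioi_eq_one_sub_densityCDF (hf_int : Integrable f) (hf_mass : ∫ x, f x = 1)
    (x : ℝ) : ∫ t in Ioi x, f t = 1 - densityCDF f x := by
  rw [densityCDF, ← hf_mass,
    ← intervalIntegral.integral_Iic_add_Ioi hf_int.integrableOn hf_int.integrableOn]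
  ring

theorem densityCDF_sub_densityCDF (hf_int : Integrable f) (a b : ℝ) :
    densityCDF f b - densityCDF f a = ∫ t in a..b, f t :=
  intervalIntegral.integral_Iic_sub_Iic hf_int.integrableOn hf_int.integrableOn

theorem hasDerivAt_densityCDF (hf_cont : Continuous f) (hf_int : Integrable f) (x : ℝ) :
    HasDerivAt (densityCDF f) (f x) x := by
  have h : densityCDF f = fun y => densityCDF f 0 + ∫ t in (0:ℝ)..y, f t := funext fun y => by
    rw [← densityCDF_sub_densityCDF hf_int]
    ring
  rw [h]
  exact (hf_cont.integral_hasStrictDerivAt 0 x).hasDerivAt.const_add _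

theorem densityCDF_mul_le_mul_densityCDF (hf_nonneg : ∀ x, 0 ≤ f x) (hf_int : Integrable f)
    (hlogconc : IsLogConcave f) {x y : ℝ} (hxy : x ≤ y) :
    densityCDF f x * f y ≤ f x * densityCDF f y := by
  calc densityCDF f x * f y = ∫ t in Iic x, f t * f y := (integral_mul_const _ _).symm
    _ ≤ ∫ t in Iic x, f x * f (t + (y - x)) := by
        refine setIntegral_mono_on (hf_int.integrableOn.mul_const _)
          ((hf_int.comp_add_right _).const_mul _).integrableOn measurableSet_Iic fun t ht => ?_
        rw [← add_sub_assoc]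
        exact hlogconc.mul_le_mul_add_sub hf_nonneg ht hxy
    _ = f x * densityCDF f y := by
        rw [integral_const_mul, integral_Iic_comp_add_right, add_sub_cancel, densityCDF]

theorem one_sub_densityCDF_mul_le_mul_one_sub_densityCDF (hf_nonneg : ∀ x, 0 ≤ f x)
    (hf_int : Integrable f) (hf_mass : ∫ x, f x = 1) (hlogconc : IsLogConcave f) {x y : ℝ}
    (hxy : x ≤ y) : (1 - densityCDF f y) * f x ≤ f y * (1 - densityCDF f x) := by
  rw [← integral_Ioi_eq_one_sub_densityCDF hf_int hf_mass,
    ← integral_Ioi_eq_one_sub_densityCDF hf_int hf_mass]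
  calc (∫ t in Ioi y, f t) * f x = ∫ t in Ioi y, f x * f t := by
        rw [← integral_mul_const]
        simp only [mul_comm]
    _ ≤ ∫ t in Ioi y, f y * f (t + (x - y)) := by
        refine setIntegral_mono_on ((hf_int.const_mul _).integrableOn)
          ((hf_int.comp_add_right _).const_mul _).integrableOn measurableSet_Ioi fun t ht => ?_
        rw [← add_sub_assoc, add_comm t]
        exact hlogconc.mul_le_mul_add_sub hf_nonneg hxy (le_of_lt ht)
    _ = f y * ∫ t in Ioi x, f t := by
        rw [integral_const_mul, integral_Ioi_comp_add_right, add_sub_cancel]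

theorem pos_of_densityCDF_mem_Ioo (hf_nonneg : ∀ x, 0 ≤ f x) (hf_int : Integrable f)
    (hf_mass : ∫ x, f x = 1) (hlogconc : IsLogConcave f) {x : ℝ}
    (hx : densityCDF f x ∈ Ioo 0 1) : 0 < f x := by
  refine (hf_nonneg x).lt_of_ne' fun hfx => hx.2.ne ?_
  have hvanish : EqOn f 0 (Ioi x) := fun y hy => by
    have h := densityCDF_mul_le_mul_densityCDF hf_nonneg hf_int hlogconc hy.le
    rw [hfx, zero_mul, ← mul_zero (densityCDF f x)] at h
    exact le_antisymm (le_of_mul_le_mul_left h hx.1) (hf_nonneg y)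
  have h := integral_Ioi_eq_one_sub_densityCDF hf_int hf_mass x
  rw [setIntegral_congr_fun measurableSet_Ioi hvanish, Pi.zero_def, integral_zero] at h
  linarith

end DensityCDF

section Score

variable {f : ℝ → ℝ}

theorem score_le_div_densityCDF (hf_cont : Continuous f) (hf_nonneg : ∀ x, 0 ≤ f x)
    (hf_int : Integrable f) (hlogconc : IsLogConcave f) {x ψ : ℝ} (hx : 0 < densityCDF f x)
    (hfx : 0 < f x) (hψ : HasDerivWithinAt (fun t => log (f t)) ψ (Ici x) x) :
    ψ ≤ f x / densityCDF f x := by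
  refine le_of_hasDerivWithinAt_Ici hψ
    ((hasDerivAt_densityCDF hf_cont hf_int x).log hx.ne').hasDerivWithinAt ?_
  filter_upwards [nhdsWithin_le_nhds (hf_cont.continuousAt.eventually_const_lt hfx),
    self_mem_nhdsWithin] with y hfy (hxy : x < y)
  have hy : 0 < densityCDF f y := hx.trans_le (densityCDF_mono hf_nonneg hf_int hxy.le)
  have h := log_le_log (by positivity)
    (densityCDF_mul_le_mul_densityCDF hf_nonneg hf_int hlogconc hxy.le)
  rw [log_mul hx.ne' hfy.ne', log_mul hfx.ne' hy.ne'] at h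
  linarith

theorem neg_div_one_sub_densityCDF_le_score (hf_cont : Continuous f) (hf_nonneg : ∀ x, 0 ≤ f x)
    (hf_int : Integrable f) (hf_mass : ∫ x, f x = 1) (hlogconc : IsLogConcave f) {x ψ : ℝ}
    (hx : densityCDF f x < 1) (hfx : 0 < f x)
    (hψ : HasDerivWithinAt (fun t => log (f t)) ψ (Ici x) x) :
    -(f x / (1 - densityCDF f x)) ≤ ψ := by
  have hF := hasDerivAt_densityCDF hf_cont hf_int x
  rw [← neg_div]
  refine le_of_hasDerivWithinAt_Ici ((hF.const_sub 1).log (sub_pos.2 hx).ne').hasDerivWithinAt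
    hψ ?_
  filter_upwards [nhdsWithin_le_nhds (hf_cont.continuousAt.eventually_const_lt hfx),
    nhdsWithin_le_nhds (hF.continuousAt.eventually_lt_const hx),
    self_mem_nhdsWithin] with y hfy hy (hxy : x < y)
  have h := log_le_log (mul_pos (sub_pos.2 hy) hfx)
    (one_sub_densityCDF_mul_le_mul_one_sub_densityCDF hf_nonneg hf_int hf_mass hlogconc hxy.le)
  rw [log_mul (sub_pos.2 hy).ne' hfx.ne', log_mul hfy.ne' (sub_pos.2 hx).ne'] at h
  linarith

theorem abs_score_mul_min_le (hf_cont : Continuous f) (hf_nonneg : ∀ x, 0 ≤ f x)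
    (hf_int : Integrable f) (hf_mass : ∫ x, f x = 1) (hlogconc : IsLogConcave f) {x ψ : ℝ}
    (hx : densityCDF f x ∈ Ioo 0 1) (hψ : HasDerivWithinAt (fun t => log (f t)) ψ (Ici x) x) :
    |ψ| * min (densityCDF f x) (1 - densityCDF f x) ≤ f x := by
  have hfx := pos_of_densityCDF_mem_Ioo hf_nonneg hf_int hf_mass hlogconc hx
  rcases le_total 0 ψ with hψ0 | hψ0
  · rw [abs_of_nonneg hψ0]
    calc ψ * min (densityCDF f x) (1 - densityCDF f x) ≤ ψ * densityCDF f x :=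
          mul_le_mul_of_nonneg_left (min_le_left _ _) hψ0
      _ ≤ f x := (le_div_iff₀ hx.1).1
          (score_le_div_densityCDF hf_cont hf_nonneg hf_int hlogconc hx.1 hfx hψ)
  · rw [abs_of_nonpos hψ0]
    calc -ψ * min (densityCDF f x) (1 - densityCDF f x) ≤ -ψ * (1 - densityCDF f x) :=
          mul_le_mul_of_nonneg_left (min_le_right _ _) (neg_nonneg.2 hψ0)
      _ ≤ f x := (le_div_iff₀ (sub_pos.2 hx.2)).1 <| neg_le.1 <|
          neg_div_one_sub_densityCDF_le_score hf_cont hf_nonneg hf_int hf_mass hlogconc hx.2 hfx hψ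

end Score

section Gap

variable {f : ℝ → ℝ} {a b : ℝ}

theorem densityCDF_sub_mul_le (hf_nonneg : ∀ x, 0 ≤ f x) (hf_int : Integrable f)
    (hlogconc : IsLogConcave f) (hab : a ≤ b) :
    (densityCDF f b - densityCDF f a) * densityCDF f a ≤ (b - a) * f a * densityCDF f b := by
  rw [densityCDF_sub_densityCDF hf_int, ← intervalIntegral.integral_mul_const, mul_assoc,
    ← smul_eq_mul (b - a), ← intervalIntegral.integral_const]
  refine intervalIntegral.integral_mono_on hab (hf_int.intervalIntegrable.mul_const _)
    intervalIntegrable_const fun t ht => ?_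
  calc f t * densityCDF f a ≤ f a * densityCDF f t := by
        rw [mul_comm]; exact densityCDF_mul_le_mul_densityCDF hf_nonneg hf_int hlogconc ht.1
    _ ≤ f a * densityCDF f b :=
        mul_le_mul_of_nonneg_left (densityCDF_mono hf_nonneg hf_int ht.2) (hf_nonneg a)

theorem mul_one_sub_densityCDF_le (hf_nonneg : ∀ x, 0 ≤ f x) (hf_int : Integrable f)
    (hf_mass : ∫ x, f x = 1) (hlogconc : IsLogConcave f) (hab : a ≤ b) :
    (b - a) * f a * (1 - densityCDF f b) ≤
      (densityCDF f b - densityCDF f a) * (1 - densityCDF f a) := by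
  rw [densityCDF_sub_densityCDF hf_int, ← intervalIntegral.integral_mul_const, mul_assoc,
    ← smul_eq_mul (b - a), ← intervalIntegral.integral_const]
  refine intervalIntegral.integral_mono_on hab intervalIntegrable_const
    (hf_int.intervalIntegrable.mul_const _) fun t ht => ?_
  calc f a * (1 - densityCDF f b) ≤ f a * (1 - densityCDF f t) :=
        mul_le_mul_of_nonneg_left (by linarith [densityCDF_mono hf_nonneg hf_int ht.2])
          (hf_nonneg a)
    _ ≤ f t * (1 - densityCDF f a) := by
        rw [mul_comm]
        exact one_sub_densityCDF_mul_le_mul_one_sub_densityCDF hf_nonneg hf_int hf_mass hlogconc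
          ht.1

theorem mul_densityCDF_le (hf_nonneg : ∀ x, 0 ≤ f x) (hf_int : Integrable f)
    (hlogconc : IsLogConcave f) (hab : a ≤ b) :
    (b - a) * f b * densityCDF f a ≤ (densityCDF f b - densityCDF f a) * densityCDF f b := by
  rw [densityCDF_sub_densityCDF hf_int, ← intervalIntegral.integral_mul_const, mul_assoc,
    ← smul_eq_mul (b - a), ← intervalIntegral.integral_const]
  refine intervalIntegral.integral_mono_on hab intervalIntegrable_const
    (hf_int.intervalIntegrable.mul_const _) fun t ht => ?_
  calc f b * densityCDF f a ≤ f b * densityCDF f t :=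
        mul_le_mul_of_nonneg_left (densityCDF_mono hf_nonneg hf_int ht.1) (hf_nonneg b)
    _ ≤ f t * densityCDF f b := by
        rw [mul_comm]; exact densityCDF_mul_le_mul_densityCDF hf_nonneg hf_int hlogconc ht.2

end Gap

section DyadicGrid

variable {j : ℤ}

theorem uGrid_eq_of_neg (hj : j < 0) :
    uGrid j = 2 ^ (-|j|) / 2 ∧ uGrid (j + 1) = 2 ^ (-|j|) ∧
      (2:ℝ) ^ (-|j + 1|) = 2 * 2 ^ (-|j|) := by
  rw [abs_of_neg hj, abs_of_nonpos (by omega), neg_neg, neg_neg, uGrid, uGrid, if_pos hj.le,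
    if_pos (by omega), add_sub_cancel_right, zpow_sub_one₀ two_ne_zero, zpow_add_one₀ two_ne_zero]
  exact ⟨div_eq_mul_inv _ _ |>.symm, rfl, mul_comm _ _⟩

theorem uGrid_eq_of_nonneg (hj : 0 ≤ j) :
    uGrid j = 1 - 2 ^ (-|j|) / 2 ∧ uGrid (j + 1) = 1 - 2 ^ (-|j|) / 4 ∧
      (2:ℝ) ^ (-|j + 1|) = 2 ^ (-|j|) / 2 := by
  have hsucc : ∀ k : ℤ, (2:ℝ) ^ (-(k + 1)) = 2 ^ (-k) / 2 := fun k => by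
    rw [neg_add, zpow_add₀ two_ne_zero, zpow_neg_one, div_eq_mul_inv]
  have hj' : ¬ j + 1 ≤ 0 := by omega
  rw [abs_of_nonneg hj, abs_of_nonneg (by omega), uGrid, uGrid, if_neg hj']
  simp only [hsucc, div_div, and_true]
  refine ⟨?_, by norm_num⟩
  split_ifs with hj0
  · obtain rfl : j = 0 := le_antisymm hj0 hj
    norm_num
  · rfl

theorem zpow_neg_abs_le_one (j : ℤ) : (2:ℝ) ^ (-|j|) ≤ 1 :=
  zpow_le_one_of_nonpos₀ one_le_two (neg_nonpos.2 (abs_nonneg j))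

theorem zpow_neg_abs_le_half (hj : j < 0) : (2:ℝ) ^ (-|j|) ≤ 1 / 2 := by
  calc (2:ℝ) ^ (-|j|) ≤ 2 ^ (-1 : ℤ) :=
        zpow_le_zpow_right₀ one_le_two (by rw [abs_of_neg hj]; omega)
    _ = 1 / 2 := by norm_num

theorem uGrid_mem_Ioo (j : ℤ) : uGrid j ∈ Ioo 0 1 := by
  have : (0:ℝ) < 2 ^ (-|j|) := by positivity
  have := zpow_neg_abs_le_one j
  rcases lt_or_ge j 0 with hj | hj
  · rw [(uGrid_eq_of_neg hj).1]; constructor <;> linarith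
  · rw [(uGrid_eq_of_nonneg hj).1]; constructor <;> linarith

theorem uGrid_lt_uGrid_add_one (j : ℤ) : uGrid j < uGrid (j + 1) := by
  have : (0:ℝ) < 2 ^ (-|j|) := by positivity
  rcases lt_or_ge j 0 with hj | hj
  · rw [(uGrid_eq_of_neg hj).1, (uGrid_eq_of_neg hj).2.1]; linarith
  · rw [(uGrid_eq_of_nonneg hj).1, (uGrid_eq_of_nonneg hj).2.1]; linarith

theorem two_mul_min_uGrid (j : ℤ) : 2 * min (uGrid j) (1 - uGrid j) = 2 ^ (-|j|) := by
  have := zpow_neg_abs_le_one j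
  rcases lt_or_ge j 0 with hj | hj
  · rw [(uGrid_eq_of_neg hj).1, min_eq_left (by linarith)]; ring
  · rw [(uGrid_eq_of_nonneg hj).1, min_eq_right (by linarith)]; ring

theorem zpow_mul_uGrid_add_one_le (j : ℤ) :
    (2:ℝ) ^ (-(|j| + 3)) * uGrid (j + 1) ≤ (uGrid (j + 1) - uGrid j) * uGrid j := by
  have h8 : (2:ℝ) ^ (-(|j| + 3)) = 2 ^ (-|j|) / 8 := by
    rw [neg_add, zpow_add₀ two_ne_zero]; norm_num; ring
  have : (0:ℝ) < 2 ^ (-|j|) := by positivity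
  have := zpow_neg_abs_le_one j
  rw [h8]
  rcases lt_or_ge j 0 with hj | hj
  · obtain ⟨hu, hv, -⟩ := uGrid_eq_of_neg hj
    rw [hu, hv]; nlinarith
  · obtain ⟨hu, hv, -⟩ := uGrid_eq_of_nonneg hj
    rw [hu, hv]; nlinarith

theorem uGrid_sub_mul_one_sub_le (j : ℤ) :
    (uGrid (j + 1) - uGrid j) * (1 - uGrid j) ≤ 2 ^ (-|j|) * (1 - uGrid (j + 1)) := by
  have : (0:ℝ) < 2 ^ (-|j|) := by positivity
  rcases lt_or_ge j 0 with hj | hj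
  · have := zpow_neg_abs_le_half hj
    obtain ⟨hu, hv, -⟩ := uGrid_eq_of_neg hj
    rw [hu, hv]; nlinarith
  · obtain ⟨hu, hv, -⟩ := uGrid_eq_of_nonneg hj
    rw [hu, hv]; nlinarith

theorem uGrid_sub_mul_le (j : ℤ) :
    (uGrid (j + 1) - uGrid j) * uGrid (j + 1) ≤ 2 ^ (-|j + 1|) * uGrid j := by
  have : (0:ℝ) < 2 ^ (-|j|) := by positivity
  have := zpow_neg_abs_le_one j
  rcases lt_or_ge j 0 with hj | hj
  · obtain ⟨hu, hv, hw⟩ := uGrid_eq_of_neg hj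
    rw [hu, hv, hw]; nlinarith
  · obtain ⟨hu, hv, hw⟩ := uGrid_eq_of_nonneg hj
    rw [hu, hv, hw]; nlinarith

end DyadicGrid

/-- Sharp two-sided bounds for the gaps of the dyadic quantile grid `a_j = F₀⁻¹(u_j)` of a
continuous log-concave density with score `ψ₀`:
`2^{−(|j|+3)}/f₀(a_j) ≤ a_{j+1} − a_j ≤ min{2^{−|j|}/f₀(a_j), 2^{−|j+1|}/f₀(a_{j+1})}`
and `max{|ψ₀(a_j)|, |ψ₀(a_{j+1})|} · min{…} ≤ 2` (i.e. the min is at most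
`2/max{|ψ₀(a_j)|, |ψ₀(a_{j+1})|}`). -/
theorem dyadic_quantile_gap_bounds
    (f₀ : ℝ → ℝ) (hcont : Continuous f₀)
    (hf_nonneg : ∀ x, 0 ≤ f₀ x) (hf_int : Integrable f₀ volume) (hf_mass : ∫ x, f₀ x = 1)
    (hlogconc : ∀ x y : ℝ, ∀ t ∈ Set.Icc (0:ℝ) 1,
      f₀ x ^ t * f₀ y ^ (1 - t) ≤ f₀ (t * x + (1 - t) * y))
    (Finv : ℝ → ℝ) (hFinv : ∀ u ∈ Set.Ioo (0:ℝ) 1, (∫ t in Set.Iic (Finv u), f₀ t) = u)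
    (ψ₀ : ℝ → ℝ)
    (hψ : ∀ x : ℝ, 0 < f₀ x →
      HasDerivWithinAt (fun t => Real.log (f₀ t)) (ψ₀ x) (Set.Ici x) x)
    : ∀ j : ℤ,
      (2:ℝ) ^ (-(|j| + 3)) / f₀ (Finv (uGrid j)) ≤
        Finv (uGrid (j + 1)) - Finv (uGrid j) ∧
      Finv (uGrid (j + 1)) - Finv (uGrid j) ≤
        min ((2:ℝ) ^ (-|j|) / f₀ (Finv (uGrid j)))
          ((2:ℝ) ^ (-|j + 1|) / f₀ (Finv (uGrid (j + 1)))) ∧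
      max |ψ₀ (Finv (uGrid j))| |ψ₀ (Finv (uGrid (j + 1)))| *
        min ((2:ℝ) ^ (-|j|) / f₀ (Finv (uGrid j)))
          ((2:ℝ) ^ (-|j + 1|) / f₀ (Finv (uGrid (j + 1)))) ≤ 2 := by
  intro j
  have hF (k : ℤ) : densityCDF f₀ (Finv (uGrid k)) = uGrid k := hFinv _ (uGrid_mem_Ioo k)
  have hF_mem (k : ℤ) : densityCDF f₀ (Finv (uGrid k)) ∈ Ioo 0 1 := (hF k).symm ▸ uGrid_mem_Ioo k
  have hpos (k : ℤ) : 0 < f₀ (Finv (uGrid k)) :=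
    pos_of_densityCDF_mem_Ioo hf_nonneg hf_int hf_mass hlogconc (hF_mem k)
  have hscore (k : ℤ) : |ψ₀ (Finv (uGrid k))| * (2 ^ (-|k|) / f₀ (Finv (uGrid k))) ≤ 2 := by
    have h := abs_score_mul_min_le hcont hf_nonneg hf_int hf_mass hlogconc (hF_mem k)
      (hψ _ (hpos k))
    rw [hF k] at h
    rw [← two_mul_min_uGrid, mul_div_assoc', div_le_iff₀ (hpos k)]
    linarith
  have hab : Finv (uGrid j) ≤ Finv (uGrid (j + 1)) := ((densityCDF_mono hf_nonneg hf_int).reflect_lt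
    (by rw [hF, hF]; exact uGrid_lt_uGrid_add_one j)).le
  obtain ⟨hu0, -⟩ := uGrid_mem_Ioo j
  obtain ⟨hv0, hv1⟩ := uGrid_mem_Ioo (j + 1)
  refine ⟨?_, le_min ?_ ?_, max_mul_min_le_of_mul_le (abs_nonneg _) (abs_nonneg _) (hscore j)
    (hscore (j + 1))⟩
  · rw [div_le_iff₀ (hpos j)]
    have h := densityCDF_sub_mul_le hf_nonneg hf_int hlogconc hab
    rw [hF, hF] at h
    exact le_of_mul_le_mul_right ((zpow_mul_uGrid_add_one_le j).trans h) hv0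
  · rw [le_div_iff₀ (hpos j)]
    have h := mul_one_sub_densityCDF_le hf_nonneg hf_int hf_mass hlogconc hab
    rw [hF, hF] at h
    exact le_of_mul_le_mul_right (h.trans (uGrid_sub_mul_one_sub_le j)) (sub_pos.2 hv1)
  · rw [le_div_iff₀ (hpos (j + 1))]
    have h := mul_densityCDF_le hf_nonneg hf_int hlogconc hab
    rw [hF, hF] at h
    exact le_of_mul_le_mul_right (h.trans (uGrid_sub_mul_le j)) hu0
end
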